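/- Let q ≥ 2 and k ≥ 1 be integers and x a q-ary sequence of length k. Then the minimum over 0 ≤ z ≤ kq−1 of w(x ⊕_q b(z)) is at most β_{k,q} = k(q−1)/2 and the maximum is at least β_{k,q}; precisely, there exist indices z₁ and z₂ with 0 ≤ z₁, z₂ ≤ kq−1 such that 2·w(x ⊕_q b(z₁)) ≤ k(q−1) ≤ 2·w(x ⊕_q b(z₂)). -/

import Mathlib

/-!
Averaging: as z runs over 0, …, kq − 1, the pair (s, p) = (z / k, z % k) runs over all of
[0, q) × [0, k), and for each coordinate i and each fixed p the symbol (xᵢ + b(s,p)ᵢ) mod q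
runs over every residue mod q exactly once as s varies. Hence the kq weights sum to
k · k · q(q − 1)/2, i.e. their mean is exactly k(q − 1)/2, so some weight is at most and
some is at least that mean.
-/

/-- Weight of a q-ary sequence: sum of its symbols. -/
def wt {k : ℕ} (x : Fin k → ℕ) : ℕ := ∑ i, x i

/-- Weighting sequence b(s,p): b_i = (s+1) mod q if i-1 < p, else s
    (indices here are 0-based, so the condition is i < p). -/
def bvec (q k s p : ℕ) : Fin k → ℕ := fun i => if (i : ℕ) < p then (s + 1) % q else s

/-- The z-th weighting sequence b(z) = b(s,p) where z = s·k + p, 0 ≤ p ≤ k-1. -/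
def bz (q k z : ℕ) : Fin k → ℕ := bvec q k (z / k) (z % k)

/-- Symbol-wise addition modulo q. -/
def addq (q : ℕ) {k : ℕ} (x y : Fin k → ℕ) : Fin k → ℕ := fun i => (x i + y i) % q

open Finset

theorem Finset.sum_range_mul_div_mod {M : Type*} [AddCommMonoid M] (f : ℕ → ℕ → M) (q k : ℕ) :
    ∑ z ∈ range (q * k), f (z / k) (z % k) = ∑ s ∈ range q, ∑ p ∈ range k, f s p := by
  induction q with
  | zero => simp
  | succ q ih =>
    rw [Nat.succ_mul, sum_range_add, ih, sum_range_succ]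
    congr 1
    refine sum_congr rfl fun p hp => ?_
    have hpk : p < k := mem_range.mp hp
    rw [mul_comm, Nat.mul_add_div (by omega), Nat.div_eq_of_lt hpk, add_zero,
      Nat.mul_add_mod, Nat.mod_eq_of_lt hpk]

theorem Finset.sum_range_add_mod (q d : ℕ) :
    ∑ s ∈ range q, (d + s) % q = ∑ s ∈ range q, s := by
  induction d with
  | zero => exact sum_congr rfl fun s hs => by rw [zero_add, Nat.mod_eq_of_lt (mem_range.mp hs)]
  | succ d ih =>
    have hshift := (sum_range_succ' (fun s => (d + s) % q) q).symm.trans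
      (sum_range_succ (fun s => (d + s) % q) q)
    simp only [add_zero, Nat.add_mod_right, add_left_inj] at hshift
    simpa only [add_right_comm d 1, add_assoc d] using hshift.trans ih

theorem sum_range_add_bvec_mod (q k c p : ℕ) (i : Fin k) :
    ∑ s ∈ range q, (c + bvec q k s p i) % q = ∑ s ∈ range q, s := by
  unfold bvec
  split_ifs
  · simpa only [Nat.add_mod_mod, add_right_comm c 1, add_assoc] using sum_range_add_mod q (c + 1)
  · exact sum_range_add_mod q c

theorem sum_range_wt_addq_bz (q k : ℕ) (x : Fin k → ℕ) :
    ∑ z ∈ range (k * q), wt (addq q x (bz q k z)) = k * (k * ∑ s ∈ range q, s) := by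
  calc ∑ z ∈ range (k * q), wt (addq q x (bz q k z))
      = ∑ s ∈ range q, ∑ p ∈ range k, wt (addq q x (bvec q k s p)) := by
        rw [mul_comm]
        exact sum_range_mul_div_mod (fun s p => wt (addq q x (bvec q k s p))) q k
    _ = ∑ i, ∑ p ∈ range k, ∑ s ∈ range q, (x i + bvec q k s p i) % q := by
        simp only [wt, addq]
        rw [sum_comm_cycle]
        exact sum_congr rfl fun i _ => sum_comm
    _ = k * (k * ∑ s ∈ range q, s) := by
        simp [sum_range_add_bvec_mod]

theorem stmt6_general (q k : ℕ) (hq : 2 ≤ q) (hk : 1 ≤ k)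
    (x : Fin k → ℕ) :
    ∃ z₁ z₂ : ℕ, z₁ ≤ k * q - 1 ∧ z₂ ≤ k * q - 1 ∧
      2 * wt (addq q x (bz q k z₁)) ≤ k * (q - 1) ∧
      k * (q - 1) ≤ 2 * wt (addq q x (bz q k z₂)) := by
  have hsum : ∑ z ∈ range (k * q), 2 * wt (addq q x (bz q k z))
      = ∑ _z ∈ range (k * q), k * (q - 1) := by
    rw [← mul_sum, sum_range_wt_addq_bz, sum_const, card_range, smul_eq_mul,
      mul_left_comm 2, mul_left_comm 2, mul_comm 2, sum_range_id_mul_two]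
    ring
  have hne : (range (k * q)).Nonempty := nonempty_range_iff.mpr (Nat.mul_pos hk (by omega)).ne'
  obtain ⟨z₁, hz₁, hle₁⟩ := exists_le_of_sum_le hne hsum.le
  obtain ⟨z₂, hz₂, hle₂⟩ := exists_le_of_sum_le hne hsum.ge
  have := mem_range.mp hz₁
  have := mem_range.mp hz₂
  exact ⟨z₁, z₂, by omega, by omega, hle₁, hle₂⟩

/-- the minimum of w(x ⊕_q b(z)) over 0 ≤ z ≤ kq-1 is at most
    β_{k,q} = k(q-1)/2 and the maximum is at least β_{k,q}. -/
theorem stmt6 (q k : ℕ) (hq : 2 ≤ q) (hk : 1 ≤ k)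
    (x : Fin k → ℕ) (hx : ∀ i, x i < q) :
    ∃ z₁ z₂ : ℕ, z₁ ≤ k * q - 1 ∧ z₂ ≤ k * q - 1 ∧
      2 * wt (addq q x (bz q k z₁)) ≤ k * (q - 1) ∧
      k * (q - 1) ≤ 2 * wt (addq q x (bz q k z₂)) :=
  stmt6_general q k hq hk x
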